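/- Under the hypotheses that each calibration example's non-conformity score is an exchangeable real-valued random variable together with the test score, that all scores are almost surely distinct, and that the subgraph collections come from approximate deducibility graphs with r < ∞ always, the event that the selected filtered output Y^{q̂}_{n+1} is coherently factual holds with probability between 1 − α and 1 − α + 1/(n+1). -/

import Mathlib

/-!
On the almost sure event that the scores are distinct, the filtered output is coherently factual
exactly when the test score is among the `k = ⌈(1 - α)(n + 1)⌉` largest of all `n + 1` scores.
For distinct scores exactly `k` of the `n + 1` indices have this property, and by exchangeability
every index has it with the same probability, which is therefore
`k / (n + 1) ∈ [1 - α, 1 - α + 1 / (n + 1)]`.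
-/

open MeasureTheory

/-- The `k`-th smallest element (1-indexed) of a list of reals. -/
noncomputable def kthSmallest (l : List ℝ) (k : ℕ) : ℝ :=
  (l.mergeSort (· ≤ ·)).getD (k - 1) 0

open Finset Function

theorem List.countP_ofFn {α : Type*} {n : ℕ} (g : Fin n → α) (p : α → Prop) [DecidablePred p] :
    (List.ofFn g).countP (fun a => p a) = #{i | p (g i)} := by
  rw [List.ofFn_eq_map, List.countP_map, card_def, filter_val, ← Multiset.countP_eq_card_filter,
    Fin.univ_def, Multiset.coe_countP]
  rfl

theorem List.SortedLE.le_getElem_iff_countP_le {α : Type*} [LinearOrder α] {l : List α}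
    (hl : l.SortedLE) {i : ℕ} (hi : i < l.length) (x : α) :
    x ≤ l[i] ↔ l.countP (· < x) ≤ i := by
  constructor
  · intro hx
    have hdrop : (l.drop i).countP (· < x) = 0 := List.countP_eq_zero.2 fun a ha => by
      obtain ⟨j, hj, rfl⟩ := List.mem_drop_iff_getElem.1 ha
      simpa using hx.trans (hl.getElem_le_getElem_of_le (Nat.le_add_right i j))
    calc l.countP (· < x) = (l.take i).countP (· < x) + (l.drop i).countP (· < x) := by
          rw [← List.countP_append, List.take_append_drop]
      _ ≤ i := by
          rw [hdrop, add_zero]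
          exact List.countP_le_length.trans (List.length_take_le _ _)
  · intro hcount
    by_contra! hx
    have htake : (l.take (i + 1)).countP (· < x) = i + 1 := by
      rw [List.countP_eq_length.2, List.length_take, min_eq_left hi]
      intro a ha
      obtain ⟨j, hj, rfl⟩ := List.mem_take_iff_getElem.1 ha
      simpa using (hl.getElem_le_getElem_of_le (by omega)).trans_lt hx
    have := (List.take_sublist (i + 1) l).countP_le (p := (· < x))
    omega

theorem le_kthSmallest_iff {l : List ℝ} {k : ℕ} (hk1 : 1 ≤ k) (hk : k ≤ l.length) (x : ℝ) :
    x ≤ kthSmallest l k ↔ l.countP (· < x) < k := by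
  have hi : k - 1 < (l.mergeSort (· ≤ ·)).length := by rw [List.length_mergeSort]; omega
  rw [kthSmallest, List.getD_eq_getElem _ _ hi,
    List.sortedLE_mergeSort.le_getElem_iff_countP_le hi, (List.mergeSort_perm l _).countP_eq]
  omega

section UpperRank

variable {ι α : Type*} [Fintype ι] [LinearOrder α]

/-- The largest value has upper rank `1`. -/
def upperRank (f : ι → α) (i : ι) : ℕ := #{j | f i ≤ f j}

theorem upperRank_comp_perm (f : ι → α) (e : Equiv.Perm ι) (i : ι) :
    upperRank (f ∘ e) i = upperRank f (e i) :=
  card_equiv e (by simp)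

theorem upperRank_lt_upperRank {f : ι → α} {i j : ι} (h : f i < f j) :
    upperRank f j < upperRank f i :=
  card_lt_card
    ⟨fun l hl => by simp_all [h.le.trans], fun hsub => h.not_ge (by simpa using @hsub i)⟩

theorem upperRank_injective {f : ι → α} (hf : Injective f) : Injective (upperRank f) := by
  intro i j hij
  by_contra hne
  rcases (hf.ne hne).lt_or_gt with h | h
  · exact (upperRank_lt_upperRank h).ne' hij
  · exact (upperRank_lt_upperRank h).ne hij

theorem image_upperRank {f : ι → α} (hf : Injective f) :
    univ.image (upperRank f) = Icc 1 (Fintype.card ι) := by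
  refine eq_of_subset_of_card_le (fun r hr => ?_) ?_
  · obtain ⟨i, -, rfl⟩ := mem_image.1 hr
    exact mem_Icc.2 ⟨card_pos.2 ⟨i, by simp⟩, card_le_univ _⟩
  · rw [card_image_of_injective _ (upperRank_injective hf), Nat.card_Icc, card_univ]
    omega

theorem card_upperRank_le {f : ι → α} (hf : Injective f) {k : ℕ} (hk : k ≤ Fintype.card ι) :
    #{i | upperRank f i ≤ k} = k := by
  rw [← card_image_of_injective _ (upperRank_injective hf), ← filter_image (p := (· ≤ k)),
    image_upperRank hf,
    show (Icc 1 (Fintype.card ι)).filter (· ≤ k) = Icc 1 k by ext; simp; omega]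
  simp

theorem upperRank_last {n : ℕ} {f : Fin (n + 1) → α} (hf : Injective f) :
    upperRank f (Fin.last n) = #{i : Fin n | f (Fin.last n) < f i.castSucc} + 1 := by
  simp only [upperRank, card_filter, Fin.sum_univ_castSucc, le_refl, if_true]
  congr 1
  exact sum_congr rfl fun i _ => if_congr (hf.ne (Fin.castSucc_lt_last i).ne').le_iff_lt rfl rfl

end UpperRank

theorem one_sub_kthSmallest_le_iff {n k : ℕ} {f : Fin (n + 1) → ℝ} (hf : Injective f)
    (hk1 : 1 ≤ k) (hk : k ≤ n) :
    1 - kthSmallest (List.ofFn fun i : Fin n => 1 - f i.castSucc) k ≤ f (Fin.last n) ↔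
      upperRank f (Fin.last n) ≤ k := by
  rw [sub_le_comm, le_kthSmallest_iff hk1 (by simpa using hk), List.countP_ofFn,
    upperRank_last hf, Nat.lt_iff_add_one_le]
  simp only [sub_lt_sub_iff_left]

theorem natCeil_mul_div_mem_Icc {x m : ℝ} (hx : 0 ≤ x) (hm : 0 < m) :
    (⌈x * m⌉₊ : ℝ) / m ∈ Set.Icc x (x + 1 / m) := by
  constructor
  · rw [le_div_iff₀ hm]
    exact Nat.le_ceil _
  · rw [div_le_iff₀ hm, add_mul, one_div_mul_cancel hm.ne']
    exact (Nat.ceil_lt_add_one (by positivity)).le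

section Exchangeable

variable {Ω ι : Type*} [MeasurableSpace Ω] {μ : Measure Ω}

theorem ae_injective_of_measure_eq_zero [Countable ι] {α : Type*} {Y : ι → Ω → α}
    (hY : ∀ i j, i ≠ j → μ {ω | Y i ω = Y j ω} = 0) :
    ∀ᵐ ω ∂μ, Injective fun i => Y i ω := by
  have h : ∀ i j, ∀ᵐ ω ∂μ, Y i ω = Y j ω → i = j := fun i j => by
    by_cases hij : i = j
    · exact .of_forall fun _ _ => hij
    · filter_upwards [measure_eq_zero_iff_ae_notMem.1 (hY i j hij)] with ω hω h
      exact absurd h hω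
  filter_upwards [ae_all_iff.2 fun i => ae_all_iff.2 (h i)] with ω hω i j
  exact hω i j

variable [Fintype ι] {X : Ω → ι → ℝ}

theorem measurableSet_upperRank_le (i : ι) (k : ℕ) :
    MeasurableSet {f : ι → ℝ | upperRank f i ≤ k} := by
  have : Measurable fun f : ι → ℝ => upperRank f i := by
    simp_rw [upperRank, card_filter]
    exact Finset.measurable_sum _ fun j _ => Measurable.ite
      (measurableSet_le (measurable_pi_apply i) (measurable_pi_apply j))
      measurable_const measurable_const
  exact this measurableSet_Iic

theorem measure_upperRank_le_eq (hX : Measurable X)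
    (hexch : ∀ e : Equiv.Perm ι, μ.map (fun ω => X ω ∘ e) = μ.map X) (i j : ι) (k : ℕ) :
    μ {ω | upperRank (X ω) i ≤ k} = μ {ω | upperRank (X ω) j ≤ k} := by
  classical
  set e := Equiv.swap i j
  have hXe : Measurable fun ω => X ω ∘ e :=
    (measurable_pi_lambda _ fun l => measurable_pi_apply (e l)).comp hX
  calc μ {ω | upperRank (X ω) i ≤ k}
      = μ ((fun ω => X ω ∘ e) ⁻¹' {f | upperRank f j ≤ k}) := by
        simp [upperRank_comp_perm, e]
    _ = μ.map (fun ω => X ω ∘ e) {f | upperRank f j ≤ k} :=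
        (Measure.map_apply hXe (measurableSet_upperRank_le j k)).symm
    _ = μ {ω | upperRank (X ω) j ≤ k} := by
        rw [hexch, Measure.map_apply hX (measurableSet_upperRank_le j k)]
        rfl

theorem sum_measure_upperRank_le (hX : Measurable X) (hinj : ∀ᵐ ω ∂μ, Injective (X ω))
    {k : ℕ} (hk : k ≤ Fintype.card ι) :
    ∑ i, μ {ω | upperRank (X ω) i ≤ k} = k * μ Set.univ := by
  have hmeas i : MeasurableSet {ω | upperRank (X ω) i ≤ k} :=
    hX (measurableSet_upperRank_le i k)
  calc ∑ i, μ {ω | upperRank (X ω) i ≤ k}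
      = ∫⁻ ω, ∑ i, {ω | upperRank (X ω) i ≤ k}.indicator 1 ω ∂μ := by
        rw [lintegral_finsetSum _ fun i _ => measurable_one.indicator (hmeas i)]
        simp only [lintegral_indicator_one (hmeas _)]
    _ = ∫⁻ _, (k : ENNReal) ∂μ := lintegral_congr_ae <| hinj.mono fun ω hω => by
        simp only [Set.indicator_apply, Set.mem_ofPred_eq, Pi.one_apply, sum_boole,
          card_upperRank_le hω hk]
    _ = k * μ Set.univ := lintegral_const _

theorem measureReal_upperRank_le [IsProbabilityMeasure μ] (hX : Measurable X)
    (hexch : ∀ e : Equiv.Perm ι, μ.map (fun ω => X ω ∘ e) = μ.map X)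
    (hinj : ∀ᵐ ω ∂μ, Injective (X ω)) {k : ℕ} (hk : k ≤ Fintype.card ι) (i : ι) :
    μ.real {ω | upperRank (X ω) i ≤ k} = k / Fintype.card ι := by
  have : Nonempty ι := ⟨i⟩
  have hsum := sum_measure_upperRank_le hX hinj hk
  simp only [measure_upperRank_le_eq hX hexch _ i k, sum_const, card_univ, nsmul_eq_mul,
    measure_univ, mul_one] at hsum
  have hcard : (Fintype.card ι : ℝ) ≠ 0 := Nat.cast_ne_zero.2 Fintype.card_ne_zero
  rw [measureReal_def, eq_div_iff hcard, mul_comm]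
  simpa using congrArg ENNReal.toReal hsum

end Exchangeable

theorem stmt_9_general {Ω : Type*} [MeasurableSpace Ω] (μ : Measure Ω) [IsProbabilityMeasure μ]
    (n : ℕ) (r : Fin (n + 1) → Ω → ℝ)
    (hmeas : ∀ i, Measurable (r i))
    (hexch : ∀ e : Equiv.Perm (Fin (n + 1)),
      Measure.map (fun ω => fun i => r (e i) ω) μ = Measure.map (fun ω => fun i => r i ω) μ)
    (hdistinct : ∀ i j, i ≠ j → μ {ω | r i ω = r j ω} = 0)
    (α : ℝ) (hα1 : α < 1)
    (hk : ⌈(1 - α) * (n + 1)⌉₊ ≤ n)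
    -- the event that the filtered output `Y^{q̂}_{n+1}` is coherently factual
    (Ev : Set Ω)
    -- deterministic equivalence (proved separately): the filtered output is coherently
    -- factual iff the test score is at least `1 − q̂`
    (hEv : ∀ ω, ω ∈ Ev ↔
      1 - kthSmallest (List.ofFn fun i : Fin n => 1 - r i.castSucc ω)
          ⌈(1 - α) * (n + 1)⌉₊ ≤ r (Fin.last n) ω) :
    1 - α ≤ (μ Ev).toReal ∧ (μ Ev).toReal ≤ 1 - α + 1 / (n + 1) := by
  set k := ⌈(1 - α) * (n + 1)⌉₊
  have hk1 : 1 ≤ k := Nat.one_le_ceil_iff.2 (by have := sub_pos.2 hα1; positivity)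
  have hinj := ae_injective_of_measure_eq_zero hdistinct
  have hEv_ae : Ev =ᵐ[μ] {ω | upperRank (fun i => r i ω) (Fin.last n) ≤ k} :=
    hinj.mono fun ω hω => propext <| (hEv ω).trans (one_sub_kthSmallest_le_iff hω hk1 hk)
  have hX : Measurable fun ω i => r i ω := measurable_pi_lambda _ hmeas
  rw [← measureReal_def, measureReal_congr hEv_ae,
    measureReal_upperRank_le hX hexch hinj (by simpa using hk.trans n.le_succ),
    Fintype.card_fin, Nat.cast_succ]
  exact natCeil_mul_div_mem_Icc (sub_nonneg.2 hα1.le) (by positivity)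

/-- Calibrated Factuality (Theorem 1, abstract form): with exchangeable, a.s.-distinct
non-conformity scores `r_1, ..., r_{n+1}`, `q̂` the `⌈(1−α)(n+1)⌉`-th smallest of
`{1 − r_i}_{i=1}^n`, and the filtered-output event `E` deterministically equivalent to
`r_{n+1} ≥ 1 − q̂`, the selected filtered output is coherently factual with probability
between `1 − α` and `1 − α + 1/(n+1)`. -/
theorem stmt_9 {Ω : Type*} [MeasurableSpace Ω] (μ : Measure Ω) [IsProbabilityMeasure μ]
    (n : ℕ) (r : Fin (n + 1) → Ω → ℝ)
    (hmeas : ∀ i, Measurable (r i))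
    (hexch : ∀ e : Equiv.Perm (Fin (n + 1)),
      Measure.map (fun ω => fun i => r (e i) ω) μ = Measure.map (fun ω => fun i => r i ω) μ)
    (hdistinct : ∀ i j, i ≠ j → μ {ω | r i ω = r j ω} = 0)
    (α : ℝ) (hα0 : 0 < α) (hα1 : α < 1)
    (hk : ⌈(1 - α) * (n + 1)⌉₊ ≤ n)
    -- the event that the filtered output `Y^{q̂}_{n+1}` is coherently factual
    (Ev : Set Ω) (hEvMeas : MeasurableSet Ev)
    -- deterministic equivalence (proved separately): the filtered output is coherently
    -- factual iff the test score is at least `1 − q̂`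
    (hEv : ∀ ω, ω ∈ Ev ↔
      1 - kthSmallest (List.ofFn fun i : Fin n => 1 - r i.castSucc ω)
          ⌈(1 - α) * (n + 1)⌉₊ ≤ r (Fin.last n) ω) :
    1 - α ≤ (μ Ev).toReal ∧ (μ Ev).toReal ≤ 1 - α + 1 / (n + 1) :=
  stmt_9_general μ n r hmeas hexch hdistinct α hα1 hk Ev hEv
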